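/- (Baire Theorem for PM spaces) Let (S, 𝓕, τ) be a complete probabilistic metric space under a continuous triangle function τ. If {G_n} is a sequence of subsets of S, each dense and open in the strong topology, then ⋂_{n=1}^∞ G_n is nonempty; in fact, ⋂_{n=1}^∞ G_n is dense in S. -/

import Mathlib

/-!
Continuity of `τ` at `(H₀, H₀)` gives, for every `t > 0`, some `σ > 0` such that
`F_{p,q}(σ) > 1 - σ` and `F_{q,r}(σ) > 1 - σ` force `F_{p,r}(t) > 1 - t`. Hence the sets
`{(p, q) | F_{p,q}(t) > 1 - t}`, `t > 0`, are a base (countable up to equivalence: take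
`t = 1 / n`) of a uniformity on `S` whose topology is the strong topology and whose Cauchy
sequences and limits are those of the PM space. A complete PM space is therefore a complete,
countably generated uniform space, i.e. a completely pseudometrizable space, and the classical
Baire theorem applies.
-/

open Set Filter Topology

/-- A distance distribution function: nondecreasing, left-continuous,
with values in `[0,1]`, and vanishing on `(-∞, 0]`. -/
def IsDDF (F : ℝ → ℝ) : Prop :=
  Monotone F ∧ (∀ x : ℝ, ContinuousWithinAt F (Set.Iio x) x) ∧
    (∀ x, 0 ≤ F x ∧ F x ≤ 1) ∧ ∀ x ≤ 0, F x = 0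

/-- The condition `(F, G; h)` in the definition of the modified Lévy distance. -/
def LevyCond (F G : ℝ → ℝ) (h : ℝ) : Prop :=
  ∀ x ∈ Set.Ioo (-(1 / h)) (1 / h), F (x - h) - h ≤ G x ∧ G x ≤ F (x + h) + h

/-- The modified Lévy distance on `Δ⁺`. -/
noncomputable def dL (F G : ℝ → ℝ) : ℝ :=
  sInf {h : ℝ | h ∈ Set.Ioc (0 : ℝ) 1 ∧ LevyCond F G h ∧ LevyCond G F h}

/-- The distribution function `H₀`, equal to `0` on `(-∞, 0]` and `1` on `(0, ∞)`. -/
noncomputable def H0 : ℝ → ℝ := fun x => if x ≤ 0 then 0 else 1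

/-- A triangle function: a binary operation on `Δ⁺` that is commutative, associative,
nondecreasing in each argument, and has `H₀` as identity. -/
def IsTriangleFunction (τ : (ℝ → ℝ) → (ℝ → ℝ) → (ℝ → ℝ)) : Prop :=
  (∀ F G, IsDDF F → IsDDF G → IsDDF (τ F G)) ∧
  (∀ F G, IsDDF F → IsDDF G → τ F G = τ G F) ∧
  (∀ F G K, IsDDF F → IsDDF G → IsDDF K → τ (τ F G) K = τ F (τ G K)) ∧
  (∀ F G K, IsDDF F → IsDDF G → IsDDF K → F ≤ G → τ F K ≤ τ G K) ∧
  (∀ F, IsDDF F → τ H0 F = F)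

/-- Continuity of a triangle function with respect to the modified Lévy metric on `Δ⁺`
(sequential continuity, which is equivalent since `d_L` is a metric). -/
def ContinuousTF (τ : (ℝ → ℝ) → (ℝ → ℝ) → (ℝ → ℝ)) : Prop :=
  ∀ (F G : ℕ → ℝ → ℝ) (F₀ G₀ : ℝ → ℝ),
    (∀ n, IsDDF (F n)) → (∀ n, IsDDF (G n)) → IsDDF F₀ → IsDDF G₀ →
    Filter.Tendsto (fun n => dL (F n) F₀) Filter.atTop (nhds 0) →
    Filter.Tendsto (fun n => dL (G n) G₀) Filter.atTop (nhds 0) →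
    Filter.Tendsto (fun n => dL (τ (F n) (G n)) (τ F₀ G₀)) Filter.atTop (nhds 0)

/-- `(S, 𝓕, τ)` is a probabilistic metric space. -/
structure IsPMSpace {S : Type*} (𝓕 : S → S → ℝ → ℝ)
    (τ : (ℝ → ℝ) → (ℝ → ℝ) → (ℝ → ℝ)) : Prop where
  ddf : ∀ p q, IsDDF (𝓕 p q)
  tf : IsTriangleFunction τ
  refl : ∀ p, 𝓕 p p = H0
  ne : ∀ p q, p ≠ q → 𝓕 p q ≠ H0
  symm : ∀ p q, 𝓕 p q = 𝓕 q p
  tri : ∀ p q r, τ (𝓕 p q) (𝓕 q r) ≤ 𝓕 p r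

/-- The strong neighborhood `N_p(t) = {q : F_{p,q}(t) > 1 - t}`. -/
def Npt {S : Type*} (𝓕 : S → S → ℝ → ℝ) (p : S) (t : ℝ) : Set S :=
  {q | 1 - t < 𝓕 p q t}

/-- A set is open in the strong topology iff it contains a strong neighborhood
of each of its points. -/
def StrongOpen {S : Type*} (𝓕 : S → S → ℝ → ℝ) (U : Set S) : Prop :=
  ∀ p ∈ U, ∃ t > 0, Npt 𝓕 p t ⊆ U

/-- A set is dense in the strong topology iff it meets every nonempty strongly open set. -/
def StrongDense {S : Type*} (𝓕 : S → S → ℝ → ℝ) (A : Set S) : Prop :=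
  ∀ U, StrongOpen 𝓕 U → U.Nonempty → (U ∩ A).Nonempty

/-- Convergence of a sequence in a PM space (the `(ε, λ)`-sense). -/
def PMConv {S : Type*} (𝓕 : S → S → ℝ → ℝ) (p : ℕ → S) (p₀ : S) : Prop :=
  ∀ ε > (0 : ℝ), ∀ lam ∈ Set.Ioo (0 : ℝ) 1, ∃ n₀ : ℕ, ∀ n ≥ n₀, 1 - lam < 𝓕 (p n) p₀ ε

/-- Cauchy sequences in a PM space. -/
def PMCauchy {S : Type*} (𝓕 : S → S → ℝ → ℝ) (p : ℕ → S) : Prop :=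
  ∀ ε > (0 : ℝ), ∀ lam ∈ Set.Ioo (0 : ℝ) 1, ∃ n₀ : ℕ, ∀ n ≥ n₀, ∀ m ≥ n₀,
    1 - lam < 𝓕 (p n) (p m) ε

/-- A PM space is complete if every Cauchy sequence converges. -/
def PMComplete {S : Type*} (𝓕 : S → S → ℝ → ℝ) : Prop :=
  ∀ p : ℕ → S, PMCauchy 𝓕 p → ∃ p₀, PMConv 𝓕 p p₀

open scoped Uniformity

lemma H0_of_nonpos {x : ℝ} (hx : x ≤ 0) : H0 x = 0 := if_pos hx

lemma H0_of_pos {x : ℝ} (hx : 0 < x) : H0 x = 1 := if_neg hx.not_ge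

lemma isDDF_H0 : IsDDF H0 := by
  refine ⟨?_, fun x => ?_, fun x => ?_, fun x hx => if_pos hx⟩
  · intro x y hxy
    simp only [H0]
    split_ifs <;> linarith
  · rcases le_or_gt x 0 with hx | hx
    · refine (continuousWithinAt_const (b := (0 : ℝ))).congr (fun y hy => if_pos ?_) (if_pos hx)
      exact (mem_Iio.1 hy).le.trans hx
    · refine (continuousWithinAt_const (b := (1 : ℝ))).congr_of_eventuallyEq ?_ (H0_of_pos hx)
      filter_upwards [nhdsWithin_le_nhds (eventually_gt_nhds hx)] with y hy using H0_of_pos hy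
  · simp only [H0]
    split_ifs <;> norm_num

lemma IsDDF.one_mem_levySet {F G : ℝ → ℝ} (hF : IsDDF F) (hG : IsDDF G) :
    (1 : ℝ) ∈ {h : ℝ | h ∈ Ioc (0 : ℝ) 1 ∧ LevyCond F G h ∧ LevyCond G F h} := by
  have bF := hF.2.2.1
  have bG := hG.2.2.1
  refine ⟨⟨one_pos, le_rfl⟩, ?_, ?_⟩ <;>
  · intro x _
    constructor
    · linarith [(bF (x - 1)).2, (bG (x - 1)).2, (bF x).1, (bG x).1]
    · linarith [(bF (x + 1)).1, (bG (x + 1)).1, (bF x).2, (bG x).2]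

lemma dL_nonneg (F G : ℝ → ℝ) : 0 ≤ dL F G :=
  Real.sInf_nonneg fun _ hh => hh.1.1.le

lemma dL_le {F G : ℝ → ℝ} {h : ℝ} (hh : h ∈ Ioc (0 : ℝ) 1) (hFG : LevyCond F G h)
    (hGF : LevyCond G F h) : dL F G ≤ h :=
  csInf_le ⟨0, fun _ hh => hh.1.1.le⟩ ⟨hh, hFG, hGF⟩

lemma IsDDF.levyCond_H0 {F : ℝ → ℝ} (hF : IsDDF F) {a h : ℝ} (h0 : 0 ≤ h) (hah : a ≤ h)
    (hFa : 1 - h ≤ F a) : LevyCond F H0 h ∧ LevyCond H0 F h := by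
  have bF := hF.2.2.1
  refine ⟨fun x _ => ⟨?_, ?_⟩, fun x _ => ⟨?_, ?_⟩⟩
  · rcases le_or_gt x 0 with hx | hx
    · rw [hF.2.2.2 (x - h) (by linarith), H0_of_nonpos hx]
      linarith
    · rw [H0_of_pos hx]
      linarith [(bF (x - h)).2]
  · rcases le_or_gt x 0 with hx | hx
    · rw [H0_of_nonpos hx]
      linarith [(bF (x + h)).1]
    · rw [H0_of_pos hx]
      linarith [hF.1 (show a ≤ x + h by linarith)]
  · rcases le_or_gt (x - h) 0 with hx | hx
    · rw [H0_of_nonpos hx]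
      linarith [(bF x).1]
    · rw [H0_of_pos hx]
      linarith [hF.1 (show a ≤ x by linarith)]
  · rcases le_or_gt (x + h) 0 with hx | hx
    · rw [H0_of_nonpos hx, hF.2.2.2 x (by linarith)]
      linarith
    · rw [H0_of_pos hx]
      linarith [(bF x).2]

lemma IsDDF.dL_H0_lt {F : ℝ → ℝ} (hF : IsDDF F) {δ : ℝ} (hδ : 0 < δ) (hδ1 : δ ≤ 1)
    (hFδ : 1 - δ < F δ) : dL F H0 < δ := by
  obtain ⟨a, hFa, ha0, haδ⟩ : ∃ a, 1 - δ < F a ∧ 0 < a ∧ a < δ :=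
    (((hF.2.1 δ).eventually_const_lt hFδ).and
      (((eventually_gt_nhds hδ).filter_mono nhdsWithin_le_nhds).and self_mem_nhdsWithin)).exists
  have hh : max a (1 - F a) < δ := max_lt haδ (by linarith)
  obtain ⟨hFH, hHF⟩ := hF.levyCond_H0 (ha0.le.trans (le_max_left _ _)) (le_max_left a _)
    (by linarith [le_max_right a (1 - F a)])
  exact (dL_le ⟨ha0.trans_le (le_max_left _ _), hh.le.trans hδ1⟩ hFH hHF).trans_lt hh

lemma tendsto_dL_H0 {ι : Type*} {l : Filter ι} {F : ι → ℝ → ℝ} (hF : ∀ i, IsDDF (F i))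
    {s : ι → ℝ} (hs : Tendsto s l (𝓝[>] 0)) (hFs : ∀ i, 1 - s i < F i (s i)) :
    Tendsto (fun i => dL (F i) H0) l (𝓝 0) := by
  refine squeeze_zero' (Eventually.of_forall fun i => dL_nonneg _ _) ?_
    (tendsto_nhds_of_tendsto_nhdsWithin hs)
  filter_upwards [hs (self_mem_nhdsWithin), tendsto_nhds_of_tendsto_nhdsWithin hs
    (eventually_le_nhds one_pos)] with i hpos hle using ((hF i).dL_H0_lt hpos hle (hFs i)).le

lemma IsDDF.sub_le_of_dL_lt {F K : ℝ → ℝ} (hF : IsDDF F) (hK : IsDDF K) {h x : ℝ}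
    (hd : dL K F < h) (hh : h ≤ 1) (hx : |x| ≤ 1) : F (x - h) - h ≤ K x := by
  obtain ⟨h', ⟨⟨h'0, h'1⟩, -, hFK⟩, h'h⟩ := exists_lt_of_csInf_lt ⟨1, hK.one_mem_levySet hF⟩ hd
  have hx' : x ∈ Ioo (-(1 / h')) (1 / h') := by
    have : 1 < 1 / h' := by rw [lt_div_iff₀ h'0]; linarith
    constructor <;> linarith [abs_le.1 hx]
  linarith [(hFK x hx').1, hF.1 (show x - h ≤ x - h' by linarith)]

lemma IsDDF.tendsto_sub_left {F : ℝ → ℝ} (hF : IsDDF F) (t : ℝ) :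
    Tendsto (fun h => F (t - h) - h) (𝓝[>] 0) (𝓝 (F t)) := by
  have hleft : Tendsto (fun h : ℝ => t - h) (𝓝[>] 0) (𝓝[<] t) := by
    refine tendsto_nhdsWithin_of_tendsto_nhds_of_eventually_within _ ?_ ?_
    · simpa using (tendsto_const_nhds.sub tendsto_id).mono_left (nhdsWithin_le_nhds (a := (0 : ℝ)))
    · filter_upwards [self_mem_nhdsWithin] with h hh using sub_lt_self t hh
  simpa using ((hF.2.1 t).tendsto.comp hleft).sub (tendsto_id.mono_left nhdsWithin_le_nhds)

lemma IsDDF.eventually_lt_of_tendsto_dL {ι : Type*} {l : Filter ι} {F : ℝ → ℝ}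
    {K : ι → ℝ → ℝ} (hF : IsDDF F) (hK : ∀ i, IsDDF (K i))
    (hKF : Tendsto (fun i => dL (K i) F) l (𝓝 0)) {t : ℝ} (ht : 0 < t) (hFt : 1 - t < F t) :
    ∀ᶠ i in l, 1 - t < K i t := by
  rcases le_or_gt t 1 with ht1 | ht1
  · obtain ⟨h, hFh, hh0, hh1⟩ : ∃ h, 1 - t < F (t - h) - h ∧ 0 < h ∧ h < 1 :=
      (((hF.tendsto_sub_left t).eventually_const_lt hFt).and (eventually_mem_nhdsWithin.and
        ((eventually_lt_nhds one_pos).filter_mono nhdsWithin_le_nhds))).exists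
    filter_upwards [hKF.eventually_lt_const hh0] with i hi
    linarith [hF.sub_le_of_dL_lt (hK i) hi hh1.le (abs_le.2 ⟨by linarith, ht1⟩)]
  · exact Eventually.of_forall fun i => by linarith [((hK i).2.2.1 t).1]

/-- Continuity of `τ` at `(H₀, H₀)`, read through the strong neighbourhoods of `H₀`. -/
lemma IsTriangleFunction.eventually_forall_lt_tau {τ : (ℝ → ℝ) → (ℝ → ℝ) → (ℝ → ℝ)}
    (hτ : IsTriangleFunction τ) (hτc : ContinuousTF τ) {t : ℝ} (ht : 0 < t) :
    ∀ᶠ σ in 𝓝[>] (0 : ℝ), ∀ F G, IsDDF F → IsDDF G →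
      1 - σ < F σ → 1 - σ < G σ → 1 - t < τ F G t := by
  by_contra hbad
  obtain ⟨s, hs, hbad⟩ := frequently_iff_seq_forall.1 (not_eventually.1 hbad)
  push Not at hbad
  choose F G hF hG hFs hGs hτFG using hbad
  have hlim := hτc F G H0 H0 hF hG isDDF_H0 isDDF_H0 (tendsto_dL_H0 hF hs hFs)
    (tendsto_dL_H0 hG hs hGs)
  rw [hτ.2.2.2.2 H0 isDDF_H0] at hlim
  obtain ⟨n, hn⟩ := (isDDF_H0.eventually_lt_of_tendsto_dL (fun n => hτ.1 _ _ (hF n) (hG n))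
    hlim ht (by rw [H0_of_pos ht]; linarith)).exists
  exact (hτFG n).not_gt hn

def strongEntourage {S : Type*} (𝓕 : S → S → ℝ → ℝ) (t : ℝ) : SetRel S S :=
  {x | 1 - t < 𝓕 x.1 x.2 t}

namespace IsPMSpace

variable {S : Type*} {𝓕 : S → S → ℝ → ℝ} {τ : (ℝ → ℝ) → (ℝ → ℝ) → (ℝ → ℝ)}

lemma strongEntourage_mono (hPM : IsPMSpace 𝓕 τ) {t t' : ℝ} (htt' : t ≤ t') :
    strongEntourage 𝓕 t ⊆ strongEntourage 𝓕 t' :=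
  fun x (hx : 1 - t < 𝓕 x.1 x.2 t) => show 1 - t' < 𝓕 x.1 x.2 t' by
    linarith [(hPM.ddf x.1 x.2).1 htt']

lemma hasBasis_biInf_strongEntourage (hPM : IsPMSpace 𝓕 τ) :
    (⨅ t > 0, 𝓟 (strongEntourage 𝓕 t)).HasBasis (fun t : ℝ => 0 < t) (strongEntourage 𝓕) :=
  hasBasis_biInf_principal' (fun t ht t' ht' => ⟨min t t', lt_min ht ht',
    hPM.strongEntourage_mono (min_le_left _ _), hPM.strongEntourage_mono (min_le_right _ _)⟩)
    ⟨1, one_pos⟩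

/-- Continuity of `τ` supplies the composition axiom. -/
abbrev strongUniformSpace (hPM : IsPMSpace 𝓕 τ) (hτ : ContinuousTF τ) : UniformSpace S :=
  .ofCore <| .mk' (⨅ t > 0, 𝓟 (strongEntourage 𝓕 t))
    (fun _ hr p => by
      obtain ⟨t, ht, htr⟩ := hPM.hasBasis_biInf_strongEntourage.mem_iff.1 hr
      refine htr (show 1 - t < 𝓕 p p t from ?_)
      rw [hPM.refl, H0_of_pos ht]
      linarith)
    (fun _ hr => by
      obtain ⟨t, ht, htr⟩ := hPM.hasBasis_biInf_strongEntourage.mem_iff.1 hr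
      refine mem_of_superset (hPM.hasBasis_biInf_strongEntourage.mem_of_mem ht)
        fun x (hx : 1 - t < 𝓕 x.1 x.2 t) => htr (show 1 - t < 𝓕 x.2 x.1 t by rwa [hPM.symm]))
    (fun _ hr => by
      obtain ⟨t, ht, htr⟩ := hPM.hasBasis_biInf_strongEntourage.mem_iff.1 hr
      obtain ⟨σ, hσ, hσ0⟩ :=
        ((hPM.tf.eventually_forall_lt_tau hτ ht).and self_mem_nhdsWithin).exists
      refine ⟨_, hPM.hasBasis_biInf_strongEntourage.mem_of_mem hσ0, ?_⟩
      rintro ⟨p, r⟩ ⟨q, hpq, hqr⟩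
      exact htr (lt_of_lt_of_le (hσ _ _ (hPM.ddf p q) (hPM.ddf q r) hpq hqr) (hPM.tri p q r t)))

lemma hasBasis_strongUniformity (hPM : IsPMSpace 𝓕 τ) (hτ : ContinuousTF τ) :
    𝓤[hPM.strongUniformSpace hτ].HasBasis (fun t : ℝ => 0 < t) (strongEntourage 𝓕) :=
  hPM.hasBasis_biInf_strongEntourage

end IsPMSpace

section StrongUniformity

variable {S : Type*} [UniformSpace S] {𝓕 : S → S → ℝ → ℝ}

lemma nhds_hasBasis_Npt (hU : (𝓤 S).HasBasis (fun t : ℝ => 0 < t) (strongEntourage 𝓕))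
    (p : S) : (𝓝 p).HasBasis (fun t : ℝ => 0 < t) (Npt 𝓕 p) :=
  nhds_basis_uniformity' hU

lemma isOpen_iff_strongOpen (hU : (𝓤 S).HasBasis (fun t : ℝ => 0 < t) (strongEntourage 𝓕))
    {U : Set S} : IsOpen U ↔ StrongOpen 𝓕 U := by
  simp only [isOpen_iff_mem_nhds, (nhds_hasBasis_Npt hU _).mem_iff]
  rfl

lemma dense_iff_strongDense (hU : (𝓤 S).HasBasis (fun t : ℝ => 0 < t) (strongEntourage 𝓕))
    {A : Set S} : Dense A ↔ StrongDense 𝓕 A := by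
  simp only [dense_iff_inter_open, isOpen_iff_strongOpen hU]
  rfl

namespace IsPMSpace

variable {τ : (ℝ → ℝ) → (ℝ → ℝ) → (ℝ → ℝ)}

lemma isCountablyGenerated_uniformity (hPM : IsPMSpace 𝓕 τ)
    (hU : (𝓤 S).HasBasis (fun t : ℝ => 0 < t) (strongEntourage 𝓕)) :
    (𝓤 S).IsCountablyGenerated :=
  (hU.to_hasBasis (fun _ ht => (exists_nat_one_div_lt ht).imp fun _ hn =>
      ⟨trivial, hPM.strongEntourage_mono hn.le⟩)
    (fun n _ => ⟨1 / (n + 1 : ℝ), Nat.one_div_pos_of_nat, subset_rfl⟩)).isCountablyGenerated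

lemma pmCauchy_of_cauchySeq (hPM : IsPMSpace 𝓕 τ)
    (hU : (𝓤 S).HasBasis (fun t : ℝ => 0 < t) (strongEntourage 𝓕)) {u : ℕ → S}
    (hu : CauchySeq u) : PMCauchy 𝓕 u := by
  intro ε hε lam hlam
  obtain ⟨N, hN⟩ := hU.cauchySeq_iff.1 hu (min ε lam) (lt_min hε hlam.1)
  refine ⟨N, fun n hn m hm => ?_⟩
  have hnm : 1 - min ε lam < 𝓕 (u n) (u m) (min ε lam) := hN n hn m hm
  linarith [(hPM.ddf (u n) (u m)).1 (min_le_left ε lam), min_le_right ε lam]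

lemma tendsto_of_pmConv (hPM : IsPMSpace 𝓕 τ)
    (hU : (𝓤 S).HasBasis (fun t : ℝ => 0 < t) (strongEntourage 𝓕)) {u : ℕ → S} {p : S}
    (hu : PMConv 𝓕 u p) : Tendsto u atTop (𝓝 p) := by
  refine (nhds_hasBasis_Npt hU p).tendsto_right_iff.2 fun t ht => ?_
  have hlam : min t (1 / 2) ∈ Ioo (0 : ℝ) 1 :=
    ⟨lt_min ht one_half_pos, (min_le_right _ _).trans_lt one_half_lt_one⟩
  obtain ⟨N, hN⟩ := hu t ht _ hlam
  filter_upwards [eventually_ge_atTop N] with n hn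
  show 1 - t < 𝓕 p (u n) t
  rw [hPM.symm]
  linarith [hN n hn, min_le_left t (1 / 2)]

lemma completeSpace_of_pmComplete (hPM : IsPMSpace 𝓕 τ)
    (hU : (𝓤 S).HasBasis (fun t : ℝ => 0 < t) (strongEntourage 𝓕)) (hcomp : PMComplete 𝓕) :
    CompleteSpace S :=
  have := hPM.isCountablyGenerated_uniformity hU
  UniformSpace.complete_of_cauchySeq_tendsto fun _ hu =>
    (hcomp _ (hPM.pmCauchy_of_cauchySeq hU hu)).imp fun _ => hPM.tendsto_of_pmConv hU

end IsPMSpace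

end StrongUniformity

/-- **Baire Theorem.** In a complete PM space with continuous triangle
function, the intersection of countably many dense strongly open sets is nonempty, and
in fact dense. -/
theorem baire_theorem {S : Type*} [Nonempty S]
    (𝓕 : S → S → ℝ → ℝ) (τ : (ℝ → ℝ) → (ℝ → ℝ) → (ℝ → ℝ))
    (hPM : IsPMSpace 𝓕 τ) (hτ : ContinuousTF τ) (hcomp : PMComplete 𝓕)
    (G : ℕ → Set S) (hopen : ∀ n, StrongOpen 𝓕 (G n))
    (hdense : ∀ n, StrongDense 𝓕 (G n)) :
    (⋂ n, G n).Nonempty ∧ StrongDense 𝓕 (⋂ n, G n) := by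
  let := hPM.strongUniformSpace hτ
  have hU := hPM.hasBasis_strongUniformity hτ
  have := hPM.isCountablyGenerated_uniformity hU
  have := hPM.completeSpace_of_pmComplete hU hcomp
  have hGδ : Dense (⋂ n, G n) := dense_iInter_of_isOpen
    (fun n => (isOpen_iff_strongOpen hU).2 (hopen n))
    (fun n => (dense_iff_strongDense hU).2 (hdense n))
  exact ⟨hGδ.nonempty, (dense_iff_strongDense hU).1 hGδ⟩
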